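/- arXiv:1510.06071 — 2 statements merged into one kernel-verified Lean document; each statement's English description precedes it below -/
import Mathlib

section
/- Let N be a positive integer and let D be a strictly upper triangular N×N matrix over a field F with D² = 0. Then there exists an invertible upper triangular N×N matrix P and an involution τ of {1,…,N} such that P D P⁻¹ = A_τ, where A_τ is the matrix whose (i,j) entry is 1 if i < τ(i) = j and 0 otherwise. -/
/-!
Conjugating by upper triangular matrices, we bring the columns of `D` into the form of `A_τ` one
at a time, from left to right. Suppose the columns left of `j` already agree with `A_τ` for an
involution `τ` of those indices, so they are basis vectors `e_{τ k}` (when `τ k < k`) or zero.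
Since `D² = 0`, the column `c = D e_j` is killed by `D`, which forces `c_k = 0` whenever
`τ k < k`. Replacing `e_j` by `v = e_j - ∑_{k < τ k} c_k e_{τ k}` turns the new column into
`w = D v`, a combination of the unpaired `e_r` (`τ r = r < j`). If `w = 0`, then `j` stays
unpaired. Otherwise let `i` be the last index with `w_i ≠ 0`: replacing `e_i` by `w` keeps the
change of basis upper triangular, `D w = D² v = 0`, and `i` and `j` become paired.
-/

/-- The canonical matrix `A_τ` of an involution `τ` of `{1,…,N}`:
entry `(i,j)` is `1` if `i < τ i = j` and `0` otherwise. -/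
def Amat (F : Type) [Field F] {N : ℕ} (τ : Fin N → Fin N) : Matrix (Fin N) (Fin N) F :=
  Matrix.of fun i j => if i < τ i ∧ τ i = j then 1 else 0

open Function

theorem Function.Involutive.swap_comp {α : Type*} [DecidableEq α] {f : α → α}
    (hf : Involutive f) {a b : α} (ha : f a = a) (hb : f b = b) :
    Involutive (Equiv.swap a b ∘ f) := by
  have hcomm : ∀ x, f (Equiv.swap a b x) = Equiv.swap a b (f x) := by
    intro x
    rcases eq_or_ne x a with rfl | hxa
    · simp [ha, hb]
    rcases eq_or_ne x b with rfl | hxb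
    · simp [ha, hb]
    have hfa : f x ≠ a := fun hx => hxa (by rw [← hf x, hx, ha])
    have hfb : f x ≠ b := fun hx => hxb (by rw [← hf x, hx, hb])
    rw [Equiv.swap_apply_of_ne_of_ne hxa hxb, Equiv.swap_apply_of_ne_of_ne hfa hfb]
  intro x
  simp [hcomm, hf x]

theorem exists_last_ne_zero {n α : Type*} [Fintype n] [LinearOrder n] [Zero α] {w : n → α}
    (hw : w ≠ 0) : ∃ i, w i ≠ 0 ∧ ∀ r, i < r → w r = 0 := by
  classical
  obtain ⟨i, hi, hmax⟩ := (Finset.univ.filter fun r => w r ≠ 0).exists_max_image id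
    (by simpa [Finset.filter_nonempty_iff, funext_iff] using hw)
  refine ⟨i, (Finset.mem_filter.mp hi).2, fun r hir => ?_⟩
  by_contra hr
  exact absurd (hmax r (by simpa using hr)) (not_le.mpr hir)

namespace Matrix

section Triangular

variable {m n α : Type*}

theorem col_updateCol [DecidableEq n] (M : Matrix m n α) (k : n) (v : m → α) :
    (M.updateCol k v).col = update M.col k v := by
  ext j i
  by_cases h : j = k <;> simp [h]

theorem IsUpperTriangular.updateCol [LinearOrder n] [DecidableEq n] [Zero α]
    {M : Matrix n n α} (hM : M.IsUpperTriangular) {k : n} {v : n → α}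
    (hv : ∀ i, k < i → v i = 0) : (M.updateCol k v).IsUpperTriangular := by
  intro i j hji
  rw [updateCol_apply]
  split_ifs with hj
  · subst hj
    exact hv i hji
  · exact hM hji

variable [Fintype n] [CommRing α]

theorem col_mul {l : Type*} (A : Matrix l n α) (B : Matrix n m α) (k : m) :
    (A * B).col k = A *ᵥ B.col k := by
  ext i
  simp [mul_apply, mulVec, dotProduct]

theorem col_one [DecidableEq n] (k : n) : (1 : Matrix n n α).col k = Pi.single k 1 := by
  rw [← mulVec_single_one, one_mulVec]

theorem mulVec_eq_of_col_eq {X Y : Matrix m n α} {v : n → α}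
    (h : ∀ k, v k ≠ 0 → X.col k = Y.col k) : X *ᵥ v = Y *ᵥ v := by
  ext i
  refine Finset.sum_congr rfl fun k _ => ?_
  by_cases hk : v k = 0
  · simp [hk]
  · simp only [← col_apply, h k hk]

theorem inv_mul_mul_col_eq [DecidableEq n] {R M A : Matrix n n α} (hR : IsUnit R) {k : n}
    (h : M *ᵥ R.col k = (R * A).col k) : (R⁻¹ * M * R).col k = A.col k := by
  rw [Matrix.mul_assoc, col_mul, col_mul, h, ← col_mul,
    nonsing_inv_mul_cancel_left _ _ ((isUnit_iff_isUnit_det R).mp hR)]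

theorem conj_mul_self_eq_zero [DecidableEq n] {P D : Matrix n n α} (hP : IsUnit P)
    (hD : D * D = 0) : P * D * P⁻¹ * (P * D * P⁻¹) = 0 := by
  simp only [Matrix.mul_assoc]
  rw [nonsing_inv_mul_cancel_left _ _ ((isUnit_iff_isUnit_det P).mp hP), ← Matrix.mul_assoc D D,
    hD, Matrix.zero_mul, Matrix.mul_zero]

variable [LinearOrder n]

def IsStrictUpperTriangular (M : Matrix n n α) : Prop :=
  ∀ i j, j ≤ i → M i j = 0

theorem IsUpperTriangular.mul_isStrictUpperTriangular {A B : Matrix n n α}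
    (hA : A.IsUpperTriangular) (hB : B.IsStrictUpperTriangular) :
    (A * B).IsStrictUpperTriangular := by
  intro i j hji
  rw [mul_apply]
  refine Finset.sum_eq_zero fun m _ => ?_
  rcases lt_or_ge m i with hmi | him
  · rw [hA hmi, zero_mul]
  · rw [hB m j (hji.trans him), mul_zero]

theorem IsStrictUpperTriangular.mul_isUpperTriangular {A B : Matrix n n α}
    (hA : A.IsStrictUpperTriangular) (hB : B.IsUpperTriangular) :
    (A * B).IsStrictUpperTriangular := by
  intro i j hji
  rw [mul_apply]
  refine Finset.sum_eq_zero fun m _ => ?_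
  rcases lt_or_ge j m with hjm | hmj
  · rw [hB hjm, mul_zero]
  · rw [hA i m (hmj.trans hji), zero_mul]

variable [DecidableEq n]

theorem IsUpperTriangular.isUnit {M : Matrix n n α} (hM : M.IsUpperTriangular)
    (hdiag : ∀ i, IsUnit (M i i)) : IsUnit M := by
  rw [isUnit_iff_isUnit_det, det_of_isUpperTriangular hM, IsUnit.prod_univ_iff]
  exact hdiag

theorem IsUpperTriangular.inv {M : Matrix n n α} (hM : M.IsUpperTriangular) (hMu : IsUnit M) :
    M⁻¹.IsUpperTriangular :=
  have := M.invertibleOfIsUnitDet ((isUnit_iff_isUnit_det M).mp hMu)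
  blockTriangular_inv_of_blockTriangular hM

theorem IsStrictUpperTriangular.conj {P D : Matrix n n α} (hP : IsUnit P)
    (hPtri : P.IsUpperTriangular) (hD : D.IsStrictUpperTriangular) :
    (P * D * P⁻¹).IsStrictUpperTriangular :=
  (hPtri.mul_isStrictUpperTriangular hD).mul_isUpperTriangular (hPtri.inv hP)

end Triangular

end Matrix

open Matrix

section Amat

variable {F : Type} [Field F] {N : ℕ} {τ : Fin N → Fin N}

theorem Amat_mulVec_apply (v : Fin N → F) (r : Fin N) :
    (Amat F τ *ᵥ v) r = if r < τ r then v (τ r) else 0 := by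
  simp [Amat, mulVec, dotProduct, ite_and]

theorem col_Amat (hτ : Involutive τ) (k : Fin N) :
    (Amat F τ).col k = if τ k < k then Pi.single (τ k) 1 else 0 := by
  ext r
  by_cases hr : r = τ k
  · subst hr
    by_cases hk : τ k < k <;> simp [Amat, hτ k, hk]
  · have : τ r ≠ k := fun h => hr (h ▸ (hτ r).symm)
    by_cases hk : τ k < k <;> simp [Amat, hr, this, hk]

theorem col_mul_Amat (hτ : Involutive τ) (X : Matrix (Fin N) (Fin N) F) (k : Fin N) :
    (X * Amat F τ).col k = if τ k < k then X.col (τ k) else 0 := by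
  rw [col_mul, col_Amat hτ]
  split_ifs <;> simp

end Amat

section Canonical

variable {F : Type} [Field F] {N : ℕ}

structure IsCanonicalBelow (M : Matrix (Fin N) (Fin N) F) (τ : Fin N → Fin N) (j : ℕ) :
    Prop where
  involutive : Involutive τ
  fixed : ∀ k : Fin N, j ≤ k → τ k = k
  col_eq : ∀ k : Fin N, (k : ℕ) < j → M.col k = (Amat F τ).col k

variable {M : Matrix (Fin N) (Fin N) F} {τ : Fin N → Fin N}

theorem isCanonicalBelow_zero (M : Matrix (Fin N) (Fin N) F) : IsCanonicalBelow M id 0 :=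
  ⟨fun _ => rfl, fun _ _ => rfl, fun _ h => absurd h (Nat.not_lt_zero _)⟩

theorem IsCanonicalBelow.eq_Amat (h : IsCanonicalBelow M τ N) : M = Amat F τ :=
  ext_col fun k => h.col_eq k k.isLt

theorem IsCanonicalBelow.of_mulVec_col {R : Matrix (Fin N) (Fin N) F} {j : ℕ} (hR : IsUnit R)
    (hτ : Involutive τ) (hfix : ∀ k : Fin N, j ≤ k → τ k = k)
    (hcol : ∀ k : Fin N, (k : ℕ) < j →
      M *ᵥ R.col k = if τ k < k then R.col (τ k) else 0) :
    IsCanonicalBelow (R⁻¹ * M * R) τ j :=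
  ⟨hτ, hfix, fun k hk => inv_mul_mul_col_eq hR (by rw [hcol k hk, col_mul_Amat hτ])⟩

variable {j : Fin N}

theorem IsCanonicalBelow.lt_of_lt (h : IsCanonicalBelow M τ j) {k : Fin N} (hk : k < j) :
    τ k < j := by
  by_contra! hjk
  have hkk : k = τ k := (h.involutive k).symm.trans (h.fixed _ hjk)
  rw [← hkk] at hjk
  exact absurd hk (not_lt.mpr hjk)

theorem IsCanonicalBelow.mulVec_single (h : IsCanonicalBelow M τ j) {k : Fin N} (hk : k < j) :
    M *ᵥ Pi.single k 1 = if τ k < k then Pi.single (τ k) 1 else 0 := by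
  rw [mulVec_single_one, h.col_eq k hk, col_Amat h.involutive]

theorem IsCanonicalBelow.exists_reduced_column (h : IsCanonicalBelow M τ j)
    (hM : M.IsStrictUpperTriangular) (hM2 : M * M = 0) :
    ∃ v : Fin N → F, v j = 1 ∧ (∀ r, j < r → v r = 0) ∧
      ∀ r, (M *ᵥ v) r ≠ 0 → τ r = r ∧ r < j := by
  set c := M *ᵥ Pi.single j 1 with hc
  have hc_lt : ∀ r, c r ≠ 0 → r < j := fun r hr =>
    not_le.mp fun hjr => hr (by rw [hc, mulVec_single_one, col_apply, hM r j hjr])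
  have hMc : M *ᵥ c = Amat F τ *ᵥ c :=
    mulVec_eq_of_col_eq fun k hk => h.col_eq k (hc_lt k hk)
  have hAc : ∀ r, r < τ r → c (τ r) = 0 := fun r hr => by
    have := congrFun hMc r
    rw [hc, mulVec_mulVec, hM2, zero_mulVec, Pi.zero_apply, Amat_mulVec_apply, if_pos hr,
      ← hc] at this
    exact this.symm
  set u : Fin N → F := fun m => if τ m < m then c (τ m) else 0 with hu
  have hu_lt : ∀ m, u m ≠ 0 → m < j := fun m hm => by
    by_contra! hjm
    simp [hu, h.fixed m hjm] at hm
  have hMu : M *ᵥ u = Amat F τ *ᵥ u :=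
    mulVec_eq_of_col_eq fun k hk => h.col_eq k (hu_lt k hk)
  refine ⟨Pi.single j 1 - u, by simp [hu, h.fixed j le_rfl], fun r hr => ?_, fun r hr => ?_⟩
  · simp [hu, h.fixed r hr.le, Pi.single_eq_of_ne hr.ne']
  · rw [mulVec_sub, ← hc, hMu, Pi.sub_apply, Amat_mulVec_apply] at hr
    by_cases hlt : r < τ r
    · simp [hu, h.involutive r, hlt] at hr
    · rw [if_neg hlt, sub_zero] at hr
      refine ⟨?_, hc_lt r hr⟩
      rcases lt_trichotomy (τ r) r with hgt | heq | hlt'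
      · have hcr := hAc (τ r) (by rwa [h.involutive r])
        rw [h.involutive r] at hcr
        exact absurd hcr hr
      · exact heq
      · exact absurd hlt' hlt

theorem IsCanonicalBelow.exists_succ_of_mulVec_eq_zero (h : IsCanonicalBelow M τ j)
    {v : Fin N → F} (hvj : v j = 1) (hv : ∀ r, j < r → v r = 0) (hMv : M *ᵥ v = 0) :
    ∃ R : Matrix (Fin N) (Fin N) F, IsUnit R ∧ R.IsUpperTriangular ∧
      IsCanonicalBelow (R⁻¹ * M * R) τ (j + 1 : ℕ) := by
  set R := (1 : Matrix (Fin N) (Fin N) F).updateCol j v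
  have hRtri : R.IsUpperTriangular := IsUpperTriangular.updateCol blockTriangular_one hv
  have hR : IsUnit R := hRtri.isUnit fun r => by
    by_cases hr : r = j <;> simp [R, hr, hvj]
  refine ⟨R, hR, hRtri, .of_mulVec_col hR h.involutive (fun k hk => h.fixed k (by omega)) ?_⟩
  intro k hk
  rcases (Fin.lt_or_eq_of_le (Nat.lt_succ_iff.mp hk : k ≤ j)) with hkj | rfl
  · have hτk : τ k ≠ j := (h.lt_of_lt hkj).ne
    simp only [R, col_updateCol, update_of_ne hkj.ne, col_one, h.mulVec_single hkj]
    split_ifs <;> simp [update_of_ne hτk, col_one]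
  · simp [R, col_updateCol, hMv, h.fixed k le_rfl]

theorem IsCanonicalBelow.exists_succ_of_mulVec_ne_zero (h : IsCanonicalBelow M τ j)
    (hM2 : M * M = 0) {v : Fin N → F} (hvj : v j = 1) (hv : ∀ r, j < r → v r = 0)
    (hMv_fix : ∀ r, (M *ᵥ v) r ≠ 0 → τ r = r ∧ r < j) (hMv : M *ᵥ v ≠ 0) :
    ∃ (R : Matrix (Fin N) (Fin N) F) (τ' : Fin N → Fin N), IsUnit R ∧ R.IsUpperTriangular ∧
      IsCanonicalBelow (R⁻¹ * M * R) τ' (j + 1 : ℕ) := by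
  set w := M *ᵥ v with hw
  obtain ⟨i, hwi, hw_gt⟩ := exists_last_ne_zero hMv
  obtain ⟨hτi, hij⟩ := hMv_fix i hwi
  have hji : j ≠ i := hij.ne'
  have hMw : M *ᵥ w = 0 := by rw [hw, mulVec_mulVec, hM2, zero_mulVec]
  set R := ((1 : Matrix (Fin N) (Fin N) F).updateCol j v).updateCol i w
  have hRtri : R.IsUpperTriangular :=
    (IsUpperTriangular.updateCol blockTriangular_one hv).updateCol hw_gt
  have hR : IsUnit R := hRtri.isUnit fun r => by
    by_cases hri : r = i
    · simpa [R, hri] using hwi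
    by_cases hrj : r = j
    · subst hrj
      simp [R, hri, hvj]
    · simp [R, hri, hrj]
  have hτ' := h.involutive.swap_comp hτi (h.fixed j le_rfl)
  refine ⟨R, _, hR, hRtri, .of_mulVec_col hR hτ' (fun k hk => ?_) fun k hk => ?_⟩
  · have hkj : j < k := hk
    rw [Function.comp_apply, h.fixed k hkj.le,
      Equiv.swap_apply_of_ne_of_ne (hij.trans hkj).ne' hkj.ne']
  have hRcol : R.col = update (update (1 : Matrix (Fin N) (Fin N) F).col j v) i w := by
    simp only [R, col_updateCol]
  rcases (Fin.lt_or_eq_of_le (Nat.lt_succ_iff.mp hk : k ≤ j)) with hkj | rfl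
  · by_cases hki : k = i
    · subst hki
      simp [hRcol, hMw, hτi, not_lt.mpr hij.le]
    · have hτki : τ k ≠ i := fun h' => hki (by rw [← h.involutive k, h', hτi])
      have hτkj : τ k ≠ j := (h.lt_of_lt hkj).ne
      simp only [hRcol, update_of_ne hki, update_of_ne hkj.ne, col_one, h.mulVec_single hkj,
        Function.comp_apply, Equiv.swap_apply_of_ne_of_ne hτki hτkj]
      split_ifs <;> simp [update_of_ne hτki, update_of_ne hτkj, col_one]
  · simp [hRcol, hji, h.fixed k le_rfl, hij, ← hw]

theorem IsCanonicalBelow.exists_succ (h : IsCanonicalBelow M τ j)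
    (hM : M.IsStrictUpperTriangular) (hM2 : M * M = 0) :
    ∃ (R : Matrix (Fin N) (Fin N) F) (τ' : Fin N → Fin N), IsUnit R ∧ R.IsUpperTriangular ∧
      IsCanonicalBelow (R⁻¹ * M * R) τ' (j + 1 : ℕ) := by
  obtain ⟨v, hvj, hv, hMv_fix⟩ := h.exists_reduced_column hM hM2
  by_cases hMv : M *ᵥ v = 0
  · obtain ⟨R, hR⟩ := h.exists_succ_of_mulVec_eq_zero hvj hv hMv
    exact ⟨R, τ, hR⟩
  · exact h.exists_succ_of_mulVec_ne_zero hM2 hvj hv hMv_fix hMv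

theorem exists_conj_isCanonicalBelow {D : Matrix (Fin N) (Fin N) F}
    (hD : D.IsStrictUpperTriangular) (hD2 : D * D = 0) :
    ∀ j ≤ N, ∃ (P : Matrix (Fin N) (Fin N) F) (τ : Fin N → Fin N), IsUnit P ∧
      P.IsUpperTriangular ∧ IsCanonicalBelow (P * D * P⁻¹) τ j
  | 0, _ => ⟨1, id, isUnit_one, blockTriangular_one, by simpa using isCanonicalBelow_zero D⟩
  | j + 1, hj => by
    obtain ⟨P, τ, hP, hPtri, hcan⟩ := exists_conj_isCanonicalBelow hD hD2 j (by omega)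
    obtain ⟨R, τ', hR, hRtri, hcan'⟩ := IsCanonicalBelow.exists_succ (j := ⟨j, hj⟩) hcan
      (hD.conj hP hPtri) (conj_mul_self_eq_zero hP hD2)
    have hconj : R⁻¹ * P * D * (R⁻¹ * P)⁻¹ = R⁻¹ * (P * D * P⁻¹) * R := by
      rw [Matrix.mul_inv_rev, nonsing_inv_nonsing_inv R ((isUnit_iff_isUnit_det R).mp hR)]
      simp only [Matrix.mul_assoc]
    refine ⟨R⁻¹ * P, τ', (isUnit_nonsing_inv_iff.mpr hR).mul hP, (hRtri.inv hR).mul hPtri,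
      hconj ▸ hcan'⟩

end Canonical

theorem barannikov_existence_general (F : Type) [Field F] (N : ℕ)
    (D : Matrix (Fin N) (Fin N) F)
    (hupper : ∀ i j : Fin N, j ≤ i → D i j = 0)
    (hD2 : D * D = 0) :
    ∃ (P : Matrix (Fin N) (Fin N) F) (τ : Fin N → Fin N),
      IsUnit P ∧ P.BlockTriangular id ∧ τ ∘ τ = id ∧
        P * D * P⁻¹ = Amat F τ := by
  obtain ⟨P, τ, hP, hPtri, hcan⟩ := exists_conj_isCanonicalBelow hupper hD2 N le_rfl
  exact ⟨P, τ, hP, hPtri, hcan.involutive.comp_self, hcan.eq_Amat⟩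

/-- Barannikov canonical form (existence): any strictly upper triangular square-zero
matrix over a field is conjugate, by an invertible upper triangular matrix,
to `A_τ` for some involution `τ`. -/
theorem barannikov_existence (F : Type) [Field F] (N : ℕ) (hN : 0 < N)
    (D : Matrix (Fin N) (Fin N) F)
    (hupper : ∀ i j : Fin N, j ≤ i → D i j = 0)
    (hD2 : D * D = 0) :
    ∃ (P : Matrix (Fin N) (Fin N) F) (τ : Fin N → Fin N),
      IsUnit P ∧ P.BlockTriangular id ∧ τ ∘ τ = id ∧
        P * D * P⁻¹ = Amat F τ :=
  barannikov_existence_general F N D hupper hD2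
end

section
/- Let τ and τ' be involutions of {1,…,N} and suppose there exists an invertible upper triangular N×N matrix P over a field F with P A_τ P⁻¹ = A_{τ'}. Then τ = τ'. -/
lemma Amat_mul_right (F : Type) [Field F] {N : ℕ} (τ : Fin N → Fin N)
    (hτ : ∀ i, τ (τ i) = i) (P : Matrix (Fin N) (Fin N) F) (i l : Fin N) :
    (P * Amat F τ) i l = if τ l < l then P i (τ l) else 0 := by
  rw [Matrix.mul_apply]
  have key : ∀ j, P i j * (Amat F τ j l) = if τ l < l ∧ j = τ l then P i j else 0 := by
    intro j
    simp only [Amat, Matrix.of_apply]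
    by_cases hc : j < τ j ∧ τ j = l
    · have hj : τ l = j := by rw [← hc.2, hτ]
      have hl : τ l < l := by rw [hj, ← hc.2]; exact hc.1
      rw [if_pos hc, mul_one, if_pos ⟨hl, hj.symm⟩]
    · rw [if_neg hc, mul_zero, if_neg]
      rintro ⟨hl, hj⟩
      apply hc
      subst hj
      rw [hτ]
      exact ⟨hl, rfl⟩
  simp_rw [key]
  by_cases hl : τ l < l
  · simp only [hl, true_and]
    rw [Finset.sum_ite_eq' Finset.univ (τ l) (fun j => P i j)]
    simp
  · simp [hl]

lemma Amat_mul_left (F : Type) [Field F] {N : ℕ} (τ' : Fin N → Fin N)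
    (P : Matrix (Fin N) (Fin N) F) (i l : Fin N) :
    (Amat F τ' * P) i l = if i < τ' i then P (τ' i) l else 0 := by
  rw [Matrix.mul_apply]
  have key : ∀ j, (Amat F τ' i j) * P j l = if i < τ' i ∧ j = τ' i then P j l else 0 := by
    intro j
    simp only [Amat, Matrix.of_apply]
    by_cases hc : i < τ' i ∧ τ' i = j
    · rw [if_pos hc, one_mul, if_pos ⟨hc.1, hc.2.symm⟩]
    · rw [if_neg hc, zero_mul, if_neg (fun hd => hc ⟨hd.1, hd.2.symm⟩)]
  simp_rw [key]
  by_cases hl : i < τ' i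
  · simp only [hl, true_and]
    rw [Finset.sum_ite_eq' Finset.univ (τ' i) (fun j => P j l)]
    simp
  · simp [hl]

/-- Key step: if `P A_τ = A_{τ'} P` with `P` upper triangular with nonzero diagonal, then
every pair `(b, τ b)` with `b < τ b` satisfies `b < τ' b ≤ τ b`. -/
lemma barannikov_step (F : Type) [Field F] {N : ℕ} (τ τ' : Fin N → Fin N)
    (hτ : ∀ i, τ (τ i) = i) (P : Matrix (Fin N) (Fin N) F)
    (hPu : P.BlockTriangular id) (hd : ∀ i, P i i ≠ 0)
    (hE : P * Amat F τ = Amat F τ' * P) :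
    ∀ b, b < τ b → b < τ' b ∧ τ' b ≤ τ b := by
  intro b hb
  have e := congrFun (congrFun hE b) (τ b)
  rw [Amat_mul_right F τ hτ, Amat_mul_left F τ'] at e
  rw [hτ b, if_pos hb] at e
  by_cases h1 : b < τ' b
  · rw [if_pos h1] at e
    refine ⟨h1, ?_⟩
    by_contra hlt
    push_neg at hlt
    exact hd b (e.trans (hPu (show (id (τ b) : Fin N) < id (τ' b) from hlt)))
  · rw [if_neg h1] at e
    exact absurd e (hd b)

/-- Uniqueness in Barannikov's canonical form: if `A_τ` and `A_{τ'}` are conjugate by an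
invertible upper triangular matrix, then `τ = τ'`. -/
theorem barannikov_uniqueness (F : Type) [Field F] (N : ℕ)
    (τ τ' : Fin N → Fin N) (hτ : τ ∘ τ = id) (hτ' : τ' ∘ τ' = id)
    (P : Matrix (Fin N) (Fin N) F) (hP : IsUnit P) (hPu : P.BlockTriangular id)
    (h : P * Amat F τ * P⁻¹ = Amat F τ') :
    τ = τ' := by
  have hτi : ∀ i, τ (τ i) = i := fun i => congrFun hτ i
  have hτ'i : ∀ i, τ' (τ' i) = i := fun i => congrFun hτ' i
  have hdet : IsUnit P.det := (Matrix.isUnit_iff_isUnit_det P).mp hP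
  haveI : Invertible P := P.invertibleOfIsUnitDet hdet
  have hd : ∀ i, P i i ≠ 0 := by
    intro i hzero
    have hdd := Matrix.det_of_upperTriangular hPu
    rw [hdd] at hdet
    exact hdet.ne_zero (Finset.prod_eq_zero (Finset.mem_univ i) hzero)
  have hE : P * Amat F τ = Amat F τ' * P := by
    have := congrArg (· * P) h
    simpa [Matrix.mul_assoc, Matrix.nonsing_inv_mul P hdet] using this
  have hPu' : (P⁻¹).BlockTriangular id := Matrix.blockTriangular_inv_of_blockTriangular hPu
  have hdet' : IsUnit (P⁻¹).det := P.isUnit_nonsing_inv_det hdet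
  have hd' : ∀ i, P⁻¹ i i ≠ 0 := by
    intro i hzero
    have hdd := Matrix.det_of_upperTriangular hPu'
    rw [hdd] at hdet'
    exact hdet'.ne_zero (Finset.prod_eq_zero (Finset.mem_univ i) hzero)
  have hE' : P⁻¹ * Amat F τ' = Amat F τ * P⁻¹ := by
    have := congrArg (fun M => P⁻¹ * M * P⁻¹) hE.symm
    simpa [Matrix.mul_assoc, Matrix.nonsing_inv_mul P hdet,
      Matrix.mul_nonsing_inv P hdet] using this
  have s1 := barannikov_step F τ τ' hτi P hPu hd hE
  have s2 := barannikov_step F τ' τ hτ'i P⁻¹ hPu' hd' hE'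
  have pair1 : ∀ b, b < τ b → τ' b = τ b := by
    intro b hb
    obtain ⟨h1, h2⟩ := s1 b hb
    obtain ⟨_, h4⟩ := s2 b h1
    exact le_antisymm h2 h4
  have pair2 : ∀ b, b < τ' b → τ b = τ' b := by
    intro b hb
    obtain ⟨h1, h2⟩ := s2 b hb
    obtain ⟨_, h4⟩ := s1 b h1
    exact le_antisymm h2 h4
  funext i
  rcases lt_trichotomy i (τ i) with hlt | heq | hgt
  · exact (pair1 i hlt).symm
  · rcases lt_trichotomy i (τ' i) with h1 | h2 | h3
    · exact pair2 i h1
    · exact heq.symm.trans h2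
    · exfalso
      have hb : τ' i < τ' (τ' i) := by rw [hτ'i]; exact h3
      have ht := pair2 (τ' i) hb
      rw [hτ'i] at ht
      have h5 : τ' i = τ i := by
        have h6 := congrArg τ ht
        rw [hτi] at h6
        exact h6
      rw [h5, ← heq] at h3
      exact lt_irrefl i h3
  · have hb : τ i < τ (τ i) := by rw [hτi]; exact hgt
    have h5 := pair1 (τ i) hb
    rw [hτi] at h5
    have h6 := congrArg τ' h5
    rw [hτ'i] at h6
    exact h6
end
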